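/- arXiv:1102.4479 — 3 statements merged into one kernel-verified Lean document; each statement's English description precedes it below -/
import Mathlib

section
/- Let φ be the probability generating function of an offspring distribution with mean greater than 1, let ρ ∈ [0,1) be the smallest fixed point of φ and θ = 1 − ρ the survival probability. Then the function φ̃(s) = (1/θ)[φ(θs + 1 − θ) − (1 − θ)] is the probability generating function of a probability distribution on the nonnegative integers, φ̃ has extinction probability 0 (the smallest root of φ̃(s)=s in [0,1] is 0 if and only if φ̃(0)=0), and the Galton–Watson process with generating function φ̃ survives almost surely. -/
/-- Let `φ` be the probability generating function of an offspring distribution `p`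
with mean `> 1`, `ρ ∈ [0,1)` its smallest fixed point and `θ = 1 - ρ` the survival
probability.  Then `φ̃(s) = (1/θ)[φ(θs + 1 - θ) - (1 - θ)]` is again a probability
generating function of a distribution on ℕ, and the associated Galton–Watson process
survives almost surely: the smallest root of `φ̃(s) = s` in `[0,1]` (the extinction
probability) equals `0`. -/
theorem tilde_pgf_survives_as
    (p : ℕ → ℝ) (hp0 : ∀ k, 0 ≤ p k) (hp1 : (∑' k : ℕ, p k) = 1)
    (hmean : 1 < ∑' k : ℕ, (k : ℝ) * p k)
    (φ : ℝ → ℝ) (hφ : ∀ s, φ s = ∑' k : ℕ, p k * s ^ k)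
    (ρ : ℝ) (hρ0 : ρ ∈ Set.Ico (0 : ℝ) 1) (hρfix : φ ρ = ρ)
    (hρmin : ∀ z ∈ Set.Icc (0 : ℝ) 1, φ z = z → ρ ≤ z)
    (θ : ℝ) (hθ : θ = 1 - ρ)
    (φt : ℝ → ℝ) (hφt : ∀ s, φt s = (1 / θ) * (φ (θ * s + 1 - θ) - (1 - θ))) :
    (∃ q : ℕ → ℝ, (∀ k, 0 ≤ q k) ∧ (∑' k : ℕ, q k) = 1 ∧
        ∀ s ∈ Set.Icc (0 : ℝ) 1, φt s = ∑' k : ℕ, q k * s ^ k) ∧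
      sInf {s ∈ Set.Icc (0 : ℝ) 1 | φt s = s} = 0 := by
  obtain ⟨hρnn, hρlt⟩ := hρ0
  have hθpos : 0 < θ := by rw [hθ]; linarith
  have hps : Summable p := by
    by_contra h
    rw [tsum_eq_zero_of_not_summable h] at hp1
    norm_num at hp1
  -- the coefficients
  set A : ℕ → ℝ := fun j => ∑' k : ℕ, p k * (Nat.choose k j : ℝ) * θ ^ j * ρ ^ (k - j) with hA
  set q : ℕ → ℝ := fun j => if j = 0 then 0 else (1 / θ) * A j with hq
  -- key identity: binomial rearrangement of the shifted pgf
  have key : ∀ s : ℝ, 0 ≤ s → s ≤ 1 →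
      (φ (θ * s + ρ) = ∑' j : ℕ, A j * s ^ j) ∧ Summable (fun j => A j * s ^ j) := by
    intro s hs0 hs1
    set F : ℕ × ℕ → ℝ := fun kj =>
      p kj.1 * (Nat.choose kj.1 kj.2 : ℝ) * θ ^ kj.2 * ρ ^ (kj.1 - kj.2) * s ^ kj.2 with hF
    have hFnn : ∀ kj, 0 ≤ F kj := by
      intro kj
      have := hp0 kj.1
      have := hθpos.le
      positivity
    have hx1 : θ * s + ρ ≤ 1 := by nlinarith
    have hx0 : 0 ≤ θ * s + ρ := by positivity
    have hrow : ∀ k : ℕ, ∑' j : ℕ, F (k, j) = p k * (θ * s + ρ) ^ k := by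
      intro k
      have hzero : ∀ j ∉ Finset.range (k + 1), F (k, j) = 0 := by
        intro j hj
        simp only [Finset.mem_range, not_lt] at hj
        have : Nat.choose k j = 0 := Nat.choose_eq_zero_of_lt hj
        simp [hF, this]
      rw [tsum_eq_sum hzero, add_pow, Finset.mul_sum]
      apply Finset.sum_congr rfl
      intro j hj
      simp only [hF, mul_pow]
      ring
    have hrowsum : ∀ k : ℕ, Summable fun j => F (k, j) := by
      intro k
      apply summable_of_ne_finset_zero (s := Finset.range (k + 1))
      intro j hj
      simp only [Finset.mem_range, not_lt] at hj
      have : Nat.choose k j = 0 := Nat.choose_eq_zero_of_lt hj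
      simp [hF, this]
    have hFs : Summable F := by
      rw [summable_prod_of_nonneg hFnn]
      refine ⟨hrowsum, ?_⟩
      have heq : (fun k => ∑' j : ℕ, F (k, j)) = fun k => p k * (θ * s + ρ) ^ k := by
        funext k; exact hrow k
      rw [heq]
      apply Summable.of_nonneg_of_le (fun k => mul_nonneg (hp0 k) (pow_nonneg hx0 k)) _ hps
      intro k
      calc p k * (θ * s + ρ) ^ k ≤ p k * 1 ^ k := by
            apply mul_le_mul_of_nonneg_left _ (hp0 k)
            exact pow_le_pow_left₀ hx0 hx1 k
        _ = p k := by simp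
    have hcol : ∀ j : ℕ, Summable fun k => F (k, j) := fun j => hFs.prod_symm.prod_factor j
    have hswap : ∑' (k : ℕ) (j : ℕ), F (k, j) = ∑' (j : ℕ) (k : ℕ), F (k, j) :=
      (Summable.tsum_comm' (f := fun k j => F (k, j)) hFs hrowsum hcol).symm
    have hcolval : ∀ j : ℕ, ∑' k : ℕ, F (k, j) = A j * s ^ j := by
      intro j
      rw [hA]
      simp only [hF]
      rw [← tsum_mul_right]
    have hφval : φ (θ * s + ρ) = ∑' (k : ℕ) (j : ℕ), F (k, j) := by
      rw [hφ]
      exact tsum_congr fun k => (hrow k).symm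
    constructor
    · rw [hφval, hswap]
      exact tsum_congr hcolval
    · have heq : (fun j => A j * s ^ j) = fun j => ∑' k : ℕ, F (k, j) := by
        funext j; exact (hcolval j).symm
      rw [heq]
      exact ((summable_prod_of_nonneg (fun kj => hFnn kj.swap)).mp hFs.prod_symm).2
  have hAnn : ∀ j, 0 ≤ A j := by
    intro j
    apply tsum_nonneg
    intro k
    have := hp0 k
    have := hθpos.le
    positivity
  have hA0 : A 0 = ρ := by
    have h : A 0 = φ ρ := by
      rw [hA, hφ]
      exact tsum_congr fun k => by simp
    rw [h, hρfix]
  have h1θ : (1 : ℝ) - θ = ρ := by rw [hθ]; ring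
  have hqnn : ∀ j, 0 ≤ q j := by
    intro j
    simp only [hq]
    split
    · exact le_rfl
    · exact mul_nonneg (by positivity) (hAnn j)
  -- main pgf identity for q
  have hmain : ∀ s ∈ Set.Icc (0 : ℝ) 1, φt s = ∑' k : ℕ, q k * s ^ k := by
    intro s hs
    obtain ⟨hs0, hs1⟩ := hs
    obtain ⟨hid, hsum⟩ := key s hs0 hs1
    have harg : θ * s + 1 - θ = θ * s + ρ := by rw [hθ]; ring
    have hqsum : Summable fun j => q j * s ^ j := by
      apply Summable.of_nonneg_of_le
        (fun j => mul_nonneg (hqnn j) (pow_nonneg hs0 j))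
        _ (hsum.mul_left (1 / θ))
      intro j
      rcases Nat.eq_zero_or_pos j with h | h
      · subst h
        simp only [hq, if_pos rfl, zero_mul]
        have : 0 ≤ A 0 * s ^ 0 := mul_nonneg (hAnn 0) (pow_nonneg hs0 0)
        positivity
      · simp only [hq, if_neg h.ne']
        rw [mul_assoc]
    rw [hφt, harg, h1θ, hid]
    rw [Summable.tsum_eq_zero_add hsum, Summable.tsum_eq_zero_add hqsum]
    have hq0 : q 0 * s ^ 0 = 0 := by simp [hq]
    have hqn : ∀ n : ℕ, q (n + 1) * s ^ (n + 1) = (1 / θ) * (A (n + 1) * s ^ (n + 1)) := by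
      intro n
      have hv : q (n + 1) = 1 / θ * A (n + 1) := by simp [hq]
      rw [hv]
      ring
    rw [hq0, zero_add]
    have : ∑' n : ℕ, q (n + 1) * s ^ (n + 1)
        = (1 / θ) * ∑' n : ℕ, A (n + 1) * s ^ (n + 1) := by
      rw [← tsum_mul_left]
      exact tsum_congr hqn
    rw [this, hA0]
    ring
  refine ⟨⟨q, hqnn, ?_, hmain⟩, ?_⟩
  · have h1 := hmain 1 ⟨zero_le_one, le_refl 1⟩
    have harg : θ * 1 + 1 - θ = 1 := by ring
    have hφ1 : φ 1 = 1 := by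
      rw [hφ]
      simpa using hp1
    rw [hφt, harg, hφ1, h1θ] at h1
    have : (1 / θ) * (1 - ρ) = 1 := by
      rw [← hθ]
      field_simp
    rw [this] at h1
    simpa using h1.symm
  · have h0mem : (0 : ℝ) ∈ {s ∈ Set.Icc (0 : ℝ) 1 | φt s = s} := by
      constructor
      · exact ⟨le_refl 0, zero_le_one⟩
      · rw [hφt]
        have harg : θ * 0 + 1 - θ = ρ := by rw [hθ]; ring
        rw [harg, hρfix, h1θ]
        ring
    apply le_antisymm
    · exact csInf_le ⟨0, fun x hx => hx.1.1⟩ h0mem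
    · exact le_csInf ⟨0, h0mem⟩ fun x hx => hx.1.1
end

section
/- In the random graph on ℤ/nℤ with t = cn/2 and L = o(log n) (edges at cyclic distance at most L each open with probability 1 − e^{−t/(nL)}), for every a > 0, the largest connected component has size o(n^a) with high probability; in particular there is no giant component when c > 1. -/
/-!
Split the cycle at the `n` gaps between consecutive vertices. If some component has more than `m`
vertices, then `m` consecutive gaps are each passed over by an open edge: otherwise cut the cycle
open at a gap that no open edge passes over; a path from the leftmost to the rightmost vertex of
the component passes over every gap in between. A gap is passed over by at most `L²` potential
edges, hence with probability at most `1 - e^{-cL/2}`, and gaps at distance at least `L` are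
passed over by disjoint sets of edges, hence independently. Taking every `L`-th of the `m` gaps
and a union bound over the first one bounds the probability by
`n (1 - e^{-cL/2})^{m/L} ≤ n exp(-(m/L) e^{-cL/2})`. For `m = εn^a` and `L = o(log n)` we have
`e^{-cL/2} ≥ n^{-a/2}`, so the exponent is below `-2 log n` and the bound is at most `1/n`.
-/

open MeasureTheory Filter

/-- Bernoulli measure on `Bool` with success probability `1 - e^{-x}`. -/
noncomputable def bern01 (x : ℝ) : Measure Bool :=
  (PMF.bernoulli (Real.toNNReal (1 - Real.exp (-x)))
    (Real.toNNReal_le_one.mpr (by linarith [Real.exp_pos (-x)]))).toMeasure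

/-- The second endpoint of the potential edge `(i, k)`: the vertex `i + k + 1 (mod n)`. -/
def cycNbr {n L : ℕ} (i : Fin n) (k : Fin L) : Fin n :=
  ⟨(i.val + k.val + 1) % n, Nat.mod_lt _ i.pos⟩

/-- The graph on `ℤ/nℤ` determined by the edge configuration `ω` on the potential edges
`(i, k)` joining `i` to `i + k + 1`, `0 ≤ k < L` (all pairs at cyclic distance `≤ L`). -/
def cycGraph (n L : ℕ) (ω : Fin n × Fin L → Bool) : SimpleGraph (Fin n) :=
  SimpleGraph.fromRel fun x y => ∃ e : Fin n × Fin L, ω e = true ∧ e.1 = x ∧ cycNbr e.1 e.2 = y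

/-- The size of the largest connected component. -/
noncomputable def largestComp (n L : ℕ) (ω : Fin n × Fin L → Bool) : ℕ :=
  Finset.univ.sup fun v : Fin n => Nat.card {w : Fin n | (cycGraph n L ω).Reachable v w}

open ProbabilityTheory Function Real
open Fin.NatCast Fin.CommRing

section Independence
variable {ι : Type*} [Fintype ι] {α : ι → Type*} [∀ i, MeasurableSpace (α i)]
  [∀ i, MeasurableSingletonClass (α i)] [∀ i, Finite (α i)]
  (μ : (i : ι) → Measure (α i)) [∀ i, IsProbabilityMeasure (μ i)]

theorem measure_inter_eq_mul_of_dependsOn {S T : Finset ι} (hST : Disjoint S T)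
    {A B : Set (∀ i, α i)} (hA : DependsOn (· ∈ A) S) (hB : DependsOn (· ∈ B) T) :
    Measure.pi μ (A ∩ B) = Measure.pi μ A * Measure.pi μ B := by
  have hindep := (iIndepFun_pi (μ := μ) (X := fun _ => id) fun _ => aemeasurable_id)
    |>.indepFun_finset S T hST fun i => measurable_pi_apply i
  have hpre : ∀ {U : Finset ι} {E : Set (∀ i, α i)}, DependsOn (· ∈ E) U →
      E = (fun ω (i : U) => ω i) ⁻¹' ((fun ω (i : U) => ω i) '' E) := by
    intro U E hE
    ext ω
    refine ⟨fun h => ⟨ω, h, rfl⟩, ?_⟩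
    rintro ⟨ω', hω', heq⟩
    exact (eq_iff_iff.1 (hE fun i hi => (congrFun heq ⟨i, hi⟩).symm)).2 hω'
  rw [hpre hA, hpre hB]
  exact hindep.measure_inter_preimage_eq_mul _ _ (Set.toFinite _).measurableSet
    (Set.toFinite _).measurableSet

theorem measure_biInter_eq_prod_of_dependsOn [DecidableEq ι] {κ : Type*} [DecidableEq κ]
    (J : Finset κ) {S : κ → Finset ι} (hS : (J : Set κ).PairwiseDisjoint S)
    {E : κ → Set (∀ i, α i)} (hE : ∀ j ∈ J, DependsOn (· ∈ E j) (S j)) :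
    Measure.pi μ (⋂ j ∈ J, E j) = ∏ j ∈ J, Measure.pi μ (E j) := by
  induction J using Finset.induction_on with
  | empty => simp
  | insert j J hj ih =>
    rw [Finset.coe_insert] at hS
    have hdisj : Disjoint (S j) (J.biUnion S) :=
      (Finset.disjoint_biUnion_right _ _ _).2 fun j' hj' =>
        hS (Set.mem_insert _ _) (Set.mem_insert_of_mem _ hj') (ne_of_mem_of_not_mem hj' hj).symm
    have hdep : DependsOn (· ∈ ⋂ j' ∈ J, E j') (J.biUnion S) := by
      intro ω ω' h
      simp only [Set.mem_iInter, eq_iff_iff]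
      refine forall₂_congr fun j' hj' => ?_
      exact eq_iff_iff.1 <| hE j' (Finset.mem_insert_of_mem hj') fun i hi =>
        h i (Finset.mem_biUnion.2 ⟨j', hj', hi⟩)
    rw [Finset.set_biInter_insert, Finset.prod_insert hj,
      measure_inter_eq_mul_of_dependsOn μ hdisj (hE j (Finset.mem_insert_self j J)) hdep,
      ih (hS.subset (Set.subset_insert _ _)) fun j' hj' => hE j' (Finset.mem_insert_of_mem hj')]

end Independence

theorem measure_pi_exists_eq_true {ι : Type*} [Fintype ι] (ν : Measure Bool)
    [IsProbabilityMeasure ν] (S : Finset ι) :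
    Measure.pi (fun _ : ι => ν) {ω | ∃ i ∈ S, ω i = true} = 1 - ν {false} ^ S.card := by
  classical
  have hcompl : {ω : ι → Bool | ∃ i ∈ S, ω i = true}ᶜ
      = Set.univ.pi fun i => if i ∈ S then {false} else Set.univ := by
    ext ω
    simp only [Set.mem_compl_iff, Set.mem_ofPred_eq, not_exists, not_and, Bool.not_eq_true,
      Set.mem_pi, Set.mem_univ, true_implies]
    refine forall_congr' fun i => ?_
    split_ifs with hi <;> simp [hi]
  rw [← compl_compl {ω : ι → Bool | ∃ i ∈ S, ω i = true}, hcompl,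
    measure_compl (MeasurableSet.univ_pi fun i => by split_ifs <;> simp) (measure_ne_top _ _),
    measure_univ, Measure.pi_pi]
  simp only [apply_ite, measure_univ, Finset.prod_ite_mem, Finset.univ_inter, Finset.prod_const]

section Geometry
variable {n L : ℕ} [NeZero n]

/-- The potential edges passing over the gap between `u` and `u + 1`. -/
def cutEdges (L : ℕ) (u : Fin n) : Finset (Fin n × Fin L) := {e | (u - e.1).val ≤ e.2.val}

omit [NeZero n] in
theorem mem_cutEdges {u : Fin n} {e : Fin n × Fin L} :
    e ∈ cutEdges L u ↔ (u - e.1).val ≤ e.2.val := by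
  simp [cutEdges]

theorem card_cutEdges_le (u : Fin n) : (cutEdges L u).card ≤ L * L := by
  have hsub : cutEdges L u ⊆
      (Finset.univ : Finset (Fin L × Fin L)).image fun dk => (u - (dk.1.val : Fin n), dk.2) := by
    intro e he
    exact Finset.mem_image.2 ⟨(⟨(u - e.1).val, (mem_cutEdges.1 he).trans_lt e.2.isLt⟩, e.2),
      Finset.mem_univ _, by simp⟩
  calc (cutEdges L u).card ≤ _ := Finset.card_le_card hsub
    _ ≤ L * L := Finset.card_image_le.trans (by simp)

theorem disjoint_cutEdges_add (u : Fin n) {D : ℕ} (hLD : L ≤ D) (hDn : D + L ≤ n) :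
    Disjoint (cutEdges L u) (cutEdges L (u + D)) := by
  refine Finset.disjoint_left.2 fun e he he' => ?_
  rw [mem_cutEdges] at he he'
  have hshift : u + D - e.1 = (((u - e.1).val + D : ℕ) : Fin n) := by push_cast; ring
  rw [hshift, Fin.val_cast_of_lt (by omega)] at he'
  omega

theorem cycNbr_eq_add (i : Fin n) (k : Fin L) : cycNbr i k = i + ((k.val + 1 : ℕ) : Fin n) := by
  ext
  simp [cycNbr, Fin.val_add, Nat.add_mod, add_assoc]

/-- The position of `w` when the cycle is cut open at the gap after `j`. -/
def relPos (j w : Fin n) : ℕ := (w - (j + 1)).val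

theorem eq_add_relPos (j w : Fin n) : w = j + 1 + (relPos j w : Fin n) := by
  rw [relPos, Fin.cast_val_eq_self]; ring

theorem mem_cutEdges_add_iff (j : Fin n) (e : Fin n × Fin L) {s : ℕ}
    (hs : relPos j e.1 ≤ s) (hsn : s < n) :
    e ∈ cutEdges L (j + 1 + (s : Fin n)) ↔ s - relPos j e.1 ≤ e.2.val := by
  have hdiff : j + 1 + s - e.1 = ((s - relPos j e.1 : ℕ) : Fin n) := by
    conv_lhs => rw [eq_add_relPos j e.1]
    push_cast [Nat.cast_sub hs]; ring
  rw [mem_cutEdges, hdiff, Fin.val_cast_of_lt (by omega)]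

theorem relPos_cycNbr_of_notMem_cutEdges {j : Fin n} {e : Fin n × Fin L}
    (he : e ∉ cutEdges L j) :
    relPos j (cycNbr e.1 e.2) = relPos j e.1 + e.2.val + 1 ∧
      ∀ s, relPos j e.1 ≤ s → s ≤ relPos j e.1 + e.2.val →
        e ∈ cutEdges L (j + 1 + (s : Fin n)) := by
  have hpos : relPos j e.1 < n := Fin.isLt _
  have hgap : j + 1 + ((n - 1 : ℕ) : Fin n) = j := by
    rw [Nat.cast_sub NeZero.one_le, Fin.natCast_self]; ring
  have hlt : relPos j e.1 + e.2.val + 1 < n := by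
    rw [← hgap, mem_cutEdges_add_iff j e (by omega) (by omega)] at he
    omega
  refine ⟨?_, fun s hs hs' => (mem_cutEdges_add_iff j e hs (by omega)).2 (by omega)⟩
  have : cycNbr e.1 e.2 - (j + 1) = ((relPos j e.1 + e.2.val + 1 : ℕ) : Fin n) := by
    rw [cycNbr_eq_add]
    conv_lhs => rw [eq_add_relPos j e.1]
    push_cast; ring
  rw [relPos, this, Fin.val_cast_of_lt hlt]

end Geometry

section Components
variable {n L : ℕ} [NeZero n] {ω : Fin n × Fin L → Bool}

theorem relPos_injective (j : Fin n) : Injective (relPos j) := fun w w' h => by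
  rw [eq_add_relPos j w, eq_add_relPos j w', h]

theorem exists_open_mem_cutEdges_of_walk {j : Fin n} (hj : ∀ e ∈ cutEdges L j, ω e = false)
    {w w' : Fin n} (p : (cycGraph n L ω).Walk w w') {s : ℕ} (hs : relPos j w ≤ s)
    (hs' : s < relPos j w') : ∃ e ∈ cutEdges L (j + 1 + (s : Fin n)), ω e = true := by
  induction p with
  | nil => omega
  | @cons u x w' hadj p ih =>
    by_cases hx : relPos j x ≤ s
    · exact ih hx hs'
    simp only [cycGraph, SimpleGraph.fromRel_adj] at hadj
    obtain ⟨-, ⟨e, he, rfl, rfl⟩ | ⟨e, he, rfl, rfl⟩⟩ := hadj <;>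
      have hgeom := relPos_cycNbr_of_notMem_cutEdges (j := j) (e := e) fun h => by
        simp [hj e h] at he
    · exact ⟨e, hgeom.2 s hs (by omega), he⟩
    · omega

theorem exists_run_of_lt_largestComp {m : ℕ} (hm : m < largestComp n L ω) :
    ∃ j : Fin n, ∀ t < m, ∃ e ∈ cutEdges L (j + (t : Fin n)), ω e = true := by
  classical
  by_cases hall : ∀ u : Fin n, ∃ e ∈ cutEdges L u, ω e = true
  · exact ⟨0, fun t _ => hall _⟩
  simp only [not_forall, not_exists, not_and, Bool.not_eq_true] at hall
  obtain ⟨j, hj⟩ := hall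
  obtain ⟨v, -, hv⟩ := Finset.lt_sup_iff.1 hm
  set T := (Finset.univ.filter ((cycGraph n L ω).Reachable v)).image (relPos j)
  have hT : m < T.card := by
    rw [Finset.card_image_of_injective _ (relPos_injective j)]
    simpa [Nat.card_eq_fintype_card, Fintype.card_subtype] using hv
  have hTne : T.Nonempty := Finset.card_pos.1 (by omega)
  have hspan : T.min' hTne + m ≤ T.max' hTne := by
    have hsub : T ⊆ Finset.Icc (T.min' hTne) (T.max' hTne) := fun b hb =>
      Finset.mem_Icc.2 ⟨T.min'_le b hb, T.le_max' b hb⟩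
    have := Finset.card_le_card hsub
    rw [Nat.card_Icc] at this
    omega
  obtain ⟨w₀, hw₀, h₀⟩ := Finset.mem_image.1 (T.min'_mem hTne)
  obtain ⟨w₁, hw₁, h₁⟩ := Finset.mem_image.1 (T.max'_mem hTne)
  obtain ⟨p⟩ := (Finset.mem_filter.1 hw₀).2.symm.trans (Finset.mem_filter.1 hw₁).2
  refine ⟨j + 1 + (T.min' hTne : Fin n), fun t ht => ?_⟩
  have := exists_open_mem_cutEdges_of_walk hj p (s := T.min' hTne + t) (by omega) (by omega)
  rwa [Nat.cast_add, ← add_assoc] at this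

omit [NeZero n] in
theorem largestComp_le : largestComp n L ω ≤ n :=
  Finset.sup_le fun _ _ => (Finite.card_subtype_le _).trans (Nat.card_fin n).le

end Components

section RunProbability
variable {n L : ℕ} [NeZero n]

theorem pairwiseDisjoint_cutEdges_range (j : Fin n) {r : ℕ} (hr : r * L < n) :
    ((Finset.range r : Finset ℕ) : Set ℕ).PairwiseDisjoint
      fun t => cutEdges L (j + ((t * L : ℕ) : Fin n)) := by
  intro t ht t' ht' hne
  wlog htt' : t < t' generalizing t t'
  · exact (this ht' ht hne.symm (by omega)).symm
  rw [Finset.coe_range, Set.mem_Iio] at ht'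
  have hshift : j + ((t' * L : ℕ) : Fin n)
      = j + ((t * L : ℕ) : Fin n) + (((t' - t) * L : ℕ) : Fin n) := by
    push_cast [Nat.cast_sub htt'.le]; ring
  have hspan : (t' - t) * L + L ≤ r * L := by
    rw [← Nat.succ_mul]; exact Nat.mul_le_mul_right L (by omega)
  simp only [Function.onFun]
  rw [hshift]
  exact disjoint_cutEdges_add _ (Nat.le_mul_of_pos_left L (by omega)) (by omega)

theorem measure_lt_largestComp_le (ν : Measure Bool) [IsProbabilityMeasure ν] (m : ℕ) :
    Measure.pi (fun _ : Fin n × Fin L => ν) {ω | m < largestComp n L ω}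
      ≤ n * (1 - ν {false} ^ (L * L)) ^ (m / L) := by
  rcases le_or_gt n m with hnm | hmn
  · have hempty : {ω | m < largestComp n L ω} = ∅ :=
      Set.eq_empty_of_forall_notMem fun ω h => (largestComp_le.trans hnm).not_gt h
    simp [hempty]
  set r := m / L
  set run : Fin n → Set (Fin n × Fin L → Bool) := fun j =>
    ⋂ t ∈ Finset.range r, {ω | ∃ e ∈ cutEdges L (j + ((t * L : ℕ) : Fin n)), ω e = true}
  have hsub : {ω | m < largestComp n L ω} ⊆ ⋃ j, run j := by
    intro ω hω
    obtain ⟨j, hj⟩ := exists_run_of_lt_largestComp hω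
    refine Set.mem_iUnion.2 ⟨j, Set.mem_iInter₂.2 fun t ht => hj _ ?_⟩
    have hL : 0 < L := Nat.pos_of_ne_zero fun h => by simp [r, h] at ht
    have := (Nat.le_div_iff_mul_le hL).1 (Finset.mem_range.1 ht)
    rw [Nat.succ_mul] at this
    omega
  have hrun (j : Fin n) : Measure.pi (fun _ => ν) (run j) ≤ (1 - ν {false} ^ (L * L)) ^ r := by
    rw [measure_biInter_eq_prod_of_dependsOn _ _
      (pairwiseDisjoint_cutEdges_range j ((Nat.div_mul_le_self m L).trans_lt hmn))
      fun t _ ω ω' h => by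
        simp only [Set.mem_ofPred_eq, eq_iff_iff]
        exact exists_congr fun e => and_congr_right fun he => by rw [h e he]]
    refine (Finset.prod_le_prod' fun t _ => ?_).trans_eq
      (by rw [Finset.prod_const, Finset.card_range])
    rw [measure_pi_exists_eq_true]
    exact tsub_le_tsub_left (pow_le_pow_right_of_le_one' prob_le_one (card_cutEdges_le _)) 1
  calc Measure.pi (fun _ => ν) {ω | m < largestComp n L ω}
      ≤ Measure.pi (fun _ => ν) (⋃ j, run j) := measure_mono hsub
    _ ≤ ∑ j, Measure.pi (fun _ => ν) (run j) := measure_iUnion_fintype_le _ run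
    _ ≤ ∑ _j : Fin n, (1 - ν {false} ^ (L * L)) ^ r := Finset.sum_le_sum fun j _ => hrun j
    _ = n * (1 - ν {false} ^ (L * L)) ^ r := by simp

end RunProbability

instance (x : ℝ) : IsProbabilityMeasure (bern01 x) := by
  unfold bern01; infer_instance

theorem bern01_false {x : ℝ} (hx : 0 ≤ x) : bern01 x {false} = ENNReal.ofReal (exp (-x)) := by
  rw [bern01, PMF.toMeasure_apply_singleton _ _ (measurableSet_singleton _), PMF.bernoulli_apply,
    cond_false, ENNReal.ofReal, ENNReal.coe_inj, ← NNReal.coe_inj,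
    NNReal.coe_sub (Real.toNNReal_le_one.2 (by linarith [exp_pos (-x)])),
    Real.coe_toNNReal _ (by linarith [exp_le_one_iff.2 (neg_nonpos.2 hx)]),
    Real.coe_toNNReal _ (exp_nonneg _)]
  simp

theorem toReal_measure_lt_largestComp_le {n L : ℕ} [NeZero n] {x : ℝ} (hx : 0 ≤ x) (m : ℕ) :
    (Measure.pi (fun _ : Fin n × Fin L => bern01 x) {ω | m < largestComp n L ω}).toReal
      ≤ n * exp (-((m / L : ℕ) * exp (-x) ^ (L * L))) := by
  set y := exp (-x) ^ (L * L)
  have hy0 : 0 ≤ y := by positivity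
  have hy1 : y ≤ 1 := pow_le_one₀ (exp_nonneg _) (exp_le_one_iff.2 (neg_nonpos.2 hx))
  have hbound := measure_lt_largestComp_le (bern01 x) (n := n) (L := L) m
  rw [bern01_false hx, ← ENNReal.ofReal_pow (exp_nonneg _), ← ENNReal.ofReal_one,
    ← ENNReal.ofReal_sub _ hy0, ← ENNReal.ofReal_pow (by linarith), ← ENNReal.ofReal_natCast,
    ← ENNReal.ofReal_mul (Nat.cast_nonneg n)] at hbound
  calc _ ≤ n * (1 - y) ^ (m / L) := ENNReal.toReal_le_of_le_ofReal (by positivity) hbound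
    _ ≤ n * exp (-y) ^ (m / L) := by gcongr; linarith [add_one_le_exp (-y)]
    _ = n * exp (-((m / L : ℕ) * y)) := by rw [← exp_nat_mul]; ring_nf

theorem eventually_le_mul_log {u : ℕ → ℝ} (hu : Tendsto (fun n => u n / log n) atTop (nhds 0))
    {δ : ℝ} (hδ : 0 < δ) : ∀ᶠ n : ℕ in atTop, u n ≤ δ * log n := by
  filter_upwards [hu.eventually_lt_const hδ,
    (tendsto_log_atTop.comp tendsto_natCast_atTop_atTop).eventually_gt_atTop 0] with n hlt hlog
  exact ((div_lt_iff₀ hlog).1 hlt).le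

theorem sub_one_sub_lt_floor_div_mul (x : ℝ) {L : ℕ} (hL : 0 < L) :
    x - 1 - L < ((⌊x⌋₊ / L : ℕ) : ℝ) * L := by
  have hfloor := Nat.sub_one_lt_floor x
  have hdiv : (⌊x⌋₊ : ℝ) < ((⌊x⌋₊ / L : ℕ) : ℝ) * L + L := by
    exact_mod_cast Nat.lt_div_mul_add hL
  linarith

theorem eventually_two_mul_log_le {c a ε : ℝ} (hc : 0 < c) (ha : 0 < a) (hε : 0 < ε)
    {L : ℕ → ℕ} (hL1 : ∀ n, 1 ≤ L n)
    (hLo : Tendsto (fun n => (L n : ℝ) / log n) atTop (nhds 0)) :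
    ∀ᶠ n : ℕ in atTop, 2 * log n ≤ ((⌊ε * n ^ a⌋₊ / L n : ℕ) : ℝ) * exp (-(c * L n / 2)) := by
  have hε4 : 0 < ε / 4 := by positivity
  have hlog_le : ∀ᶠ x : ℝ in atTop, log x ≤ ε / 4 * x ^ a := by
    filter_upwards [(isLittleO_log_rpow_atTop ha).bound hε4, eventually_ge_atTop 0] with x hx hx0
    rw [norm_of_nonneg (rpow_nonneg hx0 a)] at hx
    exact (le_abs_self _).trans hx
  have hlog_sq_le : ∀ᶠ x : ℝ in atTop, log x ^ 2 ≤ ε / 4 * x ^ (a / 2) := by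
    filter_upwards [(isLittleO_log_rpow_rpow_atTop 2 (half_pos ha)).bound hε4,
      eventually_ge_atTop 0] with x hx hx0
    rw [norm_of_nonneg (rpow_nonneg hx0 _), rpow_two, norm_of_nonneg (sq_nonneg _)] at hx
    exact hx
  have hone_le : ∀ᶠ x : ℝ in atTop, 1 ≤ ε / 4 * x ^ a :=
    ((tendsto_rpow_atTop ha).const_mul_atTop hε4).eventually_ge_atTop 1
  have hnat := tendsto_natCast_atTop_atTop (R := ℝ)
  filter_upwards [hnat.eventually hlog_le, hnat.eventually hlog_sq_le, hnat.eventually hone_le,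
    eventually_le_mul_log hLo one_pos, eventually_le_mul_log hLo (div_pos ha hc),
    eventually_gt_atTop 0] with n hlog hlog_sq hone hL hcL hn
  set r := ⌊ε * n ^ a⌋₊ / L n
  have hLpos : (0 : ℝ) < L n := by exact_mod_cast hL1 n
  have hrL : ε / 2 * n ^ a ≤ r * L n := by
    linarith [sub_one_sub_lt_floor_div_mul (ε * n ^ a) (hL1 n)]
  have hexp : exp (-(a / 2 * log n)) ≤ exp (-(c * L n / 2)) := by
    rw [div_mul_eq_mul_div, le_div_iff₀ hc] at hcL
    gcongr; linarith
  have hrpow : (n : ℝ) ^ a * exp (-(a / 2 * log n)) = (n : ℝ) ^ (a / 2) := by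
    rw [rpow_def_of_pos (by positivity), rpow_def_of_pos (by positivity), ← exp_add]
    ring_nf
  refine le_of_mul_le_mul_right ?_ hLpos
  calc 2 * log n * L n ≤ 2 * log n ^ 2 := by nlinarith
    _ ≤ ε / 2 * n ^ a * exp (-(a / 2 * log n)) := by rw [mul_assoc, hrpow]; linarith
    _ ≤ r * L n * exp (-(c * L n / 2)) := by gcongr
    _ = r * exp (-(c * L n / 2)) * L n := by ring

/-- With `t = cn/2` (so each of the `nL` potential edges at cyclic distance at most `L`
is open independently with probability `1 - e^{-t/(nL)} = 1 - e^{-c/(2L)}`) and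
`L(n) = o(log n)`, for every `a > 0` the largest component is `o(n^a)` with high
probability; in particular there is no giant component (even when `c > 1`). -/
theorem no_giant_component_of_small_L (c : ℝ) (hc : 0 < c)
    (L : ℕ → ℕ) (hL1 : ∀ n, 1 ≤ L n)
    (hLo : Tendsto (fun n => (L n : ℝ) / Real.log n) atTop (nhds 0)) :
    ∀ a > (0 : ℝ), ∀ ε > (0 : ℝ),
      Tendsto (fun n =>
        ((Measure.pi fun _ : Fin n × Fin (L n) => bern01 (c / (2 * L n)))
          {ω | ε < (largestComp n (L n) ω : ℝ) / (n : ℝ) ^ a}).toReal)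
        atTop (nhds 0) := by
  intro a ha ε hε
  refine squeeze_zero' (Eventually.of_forall fun _ => ENNReal.toReal_nonneg) ?_
    tendsto_inv_atTop_nhds_zero_nat
  filter_upwards [eventually_two_mul_log_le hc ha hε hL1 hLo, eventually_gt_atTop 0]
    with n hlog hn
  have : NeZero n := ⟨hn.ne'⟩
  have hLpos : (0 : ℝ) < L n := by exact_mod_cast hL1 n
  have hevent : {ω | ε < (largestComp n (L n) ω : ℝ) / (n : ℝ) ^ a}
      = {ω | ⌊ε * n ^ a⌋₊ < largestComp n (L n) ω} := by
    ext ω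
    rw [Set.mem_ofPred_eq, Set.mem_ofPred_eq, lt_div_iff₀ (by positivity),
      Nat.floor_lt (by positivity)]
  have hy : exp (-(c / (2 * L n))) ^ (L n * L n) = exp (-(c * L n / 2)) := by
    rw [← exp_nat_mul]; push_cast; field_simp
  rw [hevent]
  calc _ ≤ n * exp (-((⌊ε * n ^ a⌋₊ / L n : ℕ) * exp (-(c / (2 * L n))) ^ (L n * L n))) :=
        toReal_measure_lt_largestComp_le (by positivity) _
    _ ≤ n * exp (-(2 * log n)) := by rw [hy]; gcongr
    _ = (n : ℝ)⁻¹ := by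
        rw [show -(2 * log n) = -log n + -log n by ring, exp_add, exp_neg,
          exp_log (by positivity)]
        field_simp
end

section
/- Under the same assumptions (ε_n → 0, t = cn/2), the number of components K_t is concentrated: K_t / E[K_t] → 1 in probability as n → ∞. -/
open MeasureTheory Filter

/-- The graph on `ℤ/nℤ` determined by the edge configuration `ω` on the potential edges
`(i, k)` joining `i` to `i + k + 1 (mod n)`, for `0 ≤ k < n/2`. -/
def cycGraph' (n : ℕ) (ω : Fin n × Fin (n / 2) → Bool) : SimpleGraph (Fin n) :=
  SimpleGraph.fromRel fun x y =>
    ∃ e : Fin n × Fin (n / 2), ω e = true ∧ e.1 = x ∧ cycNbr e.1 e.2 = y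

/-- The law of `G(cn/2)`: the edge of length `ℓ+1` at `i` has been opened at least once
by time `t = cn/2` with probability `1 - e^{-(c/2) p_{ℓ+1}}`, independently over edges. -/
noncomputable def cycMeasure (n : ℕ) (c : ℝ) (p : Fin (n / 2) → ℝ) :
    Measure (Fin n × Fin (n / 2) → Bool) :=
  Measure.pi fun e => bern01 (c / 2 * p e.2)

/-- The number of connected components of the random graph. -/
noncomputable def numComponents (n : ℕ) (ω : Fin n × Fin (n / 2) → Bool) : ℕ :=
  Nat.card (cycGraph' n ω).ConnectedComponent

/-!
Chebyshev's inequality reduces the claim to `Var K_t = o((E K_t)²)`. The potential edges at a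
vertex have total opening rate at most `c`, so each vertex is isolated with probability at least
`e^{-c}` and `E K_t ≥ n e^{-c}`. Opening or closing one edge changes `K_t` by at most one, so the
Efron–Stein inequality bounds `Var K_t` by the sum of the edges' opening probabilities, which is
at most `cn/2`. Hence `P(|K_t / E K_t - 1| > δ) ≤ c e^{2c} / (2 δ² n)`.
-/

open Function

namespace BoolCube

variable {I : Type*} [Fintype I] [DecidableEq I]

def expect (q : I → Bool → ℝ) (f : (I → Bool) → ℝ) : ℝ :=
  ∑ ω : I → Bool, (∏ i, q i (ω i)) * f ω

variable {q : I → Bool → ℝ}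

lemma expect_sub (f g : (I → Bool) → ℝ) :
    expect q (fun ω => f ω - g ω) = expect q f - expect q g := by
  simp only [expect, mul_sub, Finset.sum_sub_distrib]

lemma sq_expect_le (hq0 : ∀ i b, 0 ≤ q i b) (hq1 : ∀ i, q i false + q i true = 1)
    (f : (I → Bool) → ℝ) : expect q f ^ 2 ≤ expect q (fun ω => f ω ^ 2) := by
  have hsum : ∑ ω : I → Bool, ∏ i, q i (ω i) = 1 := by
    rw [← Fintype.prod_sum]
    exact Finset.prod_eq_one fun i _ => by rw [Fintype.sum_bool, add_comm, hq1]
  exact (Even.convexOn_pow even_two).map_sum_le (fun ω _ => Finset.prod_nonneg fun i _ => hq0 i _)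
    hsum (fun _ _ => Set.mem_univ _)

lemma expect_fin_succ {m : ℕ} (q : Fin (m + 1) → Bool → ℝ)
    (f : (Fin (m + 1) → Bool) → ℝ) :
    expect q f = ∑ b, q 0 b * expect (fun i => q i.succ) (fun τ => f (Fin.cons b τ)) := by
  rw [expect, ← (Fin.consEquiv fun _ => Bool).sum_comp, Fintype.sum_prod_type]
  refine Finset.sum_congr rfl fun b _ => ?_
  simp only [expect, Finset.mul_sum, Fin.consEquiv_apply, Fin.prod_univ_succ, Fin.cons_zero,
    Fin.cons_succ, mul_assoc]
  rfl

lemma expect_equiv {J : Type*} [Fintype J] [DecidableEq J] (e : I ≃ J) (q : J → Bool → ℝ)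
    (f : (J → Bool) → ℝ) :
    expect q f = expect (fun i => q (e i)) (fun τ => f (τ ∘ e.symm)) := by
  rw [expect, ← (e.arrowCongr (Equiv.refl Bool)).sum_comp]
  refine Finset.sum_congr rfl fun τ _ => ?_
  congr 1
  rw [← e.prod_comp]
  simp [Equiv.arrowCongr_apply]

def variance (q : I → Bool → ℝ) (f : (I → Bool) → ℝ) : ℝ :=
  expect q (fun ω => f ω ^ 2) - expect q f ^ 2

theorem variance_le_sum_fin {m : ℕ} (q : Fin m → Bool → ℝ) (hq0 : ∀ i b, 0 ≤ q i b)
    (hq1 : ∀ i, q i false + q i true = 1) (f : (Fin m → Bool) → ℝ) :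
    variance q f ≤ ∑ i, q i false * q i true *
      expect q (fun ω => (f (update ω i true) - f (update ω i false)) ^ 2) := by
  induction m with
  | zero =>
    have hq : ∀ g : (Fin 0 → Bool) → ℝ, expect q g = g default := fun g => by
      simpa [expect] using congrArg g (Subsingleton.elim _ _)
    simp [variance, hq]
  | succ m ih =>
    set q' : Fin m → Bool → ℝ := fun j => q j.succ
    have hsplit : ∀ F : (Fin (m + 1) → Bool) → ℝ, expect q F =
        q 0 false * expect q' (fun τ => F (Fin.cons false τ)) +
          q 0 true * expect q' (fun τ => F (Fin.cons true τ)) := fun F => by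
      rw [expect_fin_succ, Fintype.sum_bool, add_comm]
    have hvar_t := ih q' (fun _ _ => hq0 _ _) (fun _ => hq1 _) fun τ => f (Fin.cons true τ)
    have hvar_f := ih q' (fun _ _ => hq0 _ _) (fun _ => hq1 _) fun τ => f (Fin.cons false τ)
    have hjensen := sq_expect_le (q := q') (fun _ _ => hq0 _ _) (fun _ => hq1 _)
      fun τ => f (Fin.cons true τ) - f (Fin.cons false τ)
    rw [expect_sub] at hjensen
    simp only [variance, Fin.sum_univ_succ, hsplit, Fin.update_cons_zero, ← Fin.cons_update]
      at hvar_t hvar_f ⊢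
    simp only [mul_add, Finset.sum_add_distrib, mul_left_comm _ (q 0 _), ← Finset.mul_sum]
    simp only [q'] at *
    have hab := hq1 0
    have ha := hq0 0 false
    have hb := hq0 0 true
    generalize q 0 false = a, q 0 true = b at *
    generalize expect (fun j => q j.succ) (fun τ => f (Fin.cons false τ)) = x at *
    generalize expect (fun j => q j.succ) (fun τ => f (Fin.cons true τ)) = y at *
    -- Conditioning on the first coordinate: the variance is the mean of the conditional
    -- variances plus the variance `a * b * (y - x) ^ 2` of the conditional mean.
    have hmix : a * x ^ 2 + b * y ^ 2 - (a * x + b * y) ^ 2 = a * b * (y - x) ^ 2 := by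
      linear_combination (-(a * x ^ 2 + b * y ^ 2)) * hab
    nlinarith [mul_le_mul_of_nonneg_left hvar_t hb, mul_le_mul_of_nonneg_left hvar_f ha,
      mul_le_mul_of_nonneg_left hjensen (mul_nonneg ha hb)]

theorem variance_le_sum (q : I → Bool → ℝ) (hq0 : ∀ i b, 0 ≤ q i b)
    (hq1 : ∀ i, q i false + q i true = 1) (f : (I → Bool) → ℝ) :
    variance q f ≤ ∑ i, q i false * q i true *
      expect q (fun ω => (f (update ω i true) - f (update ω i false)) ^ 2) := by
  let e : Fin (Fintype.card I) ≃ I := (Fintype.equivFin I).symm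
  have hfin := variance_le_sum_fin (fun j => q (e j)) (fun _ _ => hq0 _ _) (fun _ => hq1 _)
    fun τ => f (τ ∘ e.symm)
  rw [variance, expect_equiv e, expect_equiv e q f, ← e.sum_comp]
  refine hfin.trans_eq (Finset.sum_congr rfl fun j _ => ?_)
  rw [expect_equiv e]
  simp only [update_comp_equiv, Equiv.symm_symm]

end BoolCube

section PiBool

lemma measureReal_false_add_true (ν : Measure Bool) [IsProbabilityMeasure ν] :
    ν.real {false} + ν.real {true} = 1 := by
  rw [← measureReal_union (by simp) (measurableSet_singleton _), Set.singleton_union,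
    ← Bool.univ_eq, probReal_univ]

lemma measureReal_pi_forall_mem {I : Type*} [Fintype I] {α : I → Type*}
    [∀ i, MeasurableSpace (α i)] (μ : ∀ i, Measure (α i))
    [∀ i, IsProbabilityMeasure (μ i)] (S : Finset I) (t : ∀ i, Set (α i)) :
    (Measure.pi μ).real {ω | ∀ i ∈ S, ω i ∈ t i} = ∏ i ∈ S, (μ i).real (t i) := by
  classical
  change (Measure.pi μ).real ((S : Set I).pi t) = _
  rw [← Set.univ_pi_ite, measureReal_def, Measure.pi_pi, ENNReal.toReal_prod]
  simp only [apply_ite, measure_univ, ENNReal.toReal_one, Finset.mem_coe, Finset.prod_ite_mem,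
    Finset.univ_inter, measureReal_def]

open ProbabilityTheory

variable {I : Type*} [Fintype I] [DecidableEq I] (μ : I → Measure Bool)
  [∀ i, IsProbabilityMeasure (μ i)]

lemma integral_pi_bool_eq_expect (f : (I → Bool) → ℝ) :
    ∫ ω, f ω ∂Measure.pi μ = BoolCube.expect (fun i b => (μ i).real {b}) f := by
  rw [integral_fintype Integrable.of_finite]
  refine Finset.sum_congr rfl fun ω _ => ?_
  rw [smul_eq_mul, measureReal_def, ← Set.univ_pi_singleton ω, Measure.pi_pi,
    ENNReal.toReal_prod]
  rfl

/-- The Efron–Stein inequality. -/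
theorem variance_pi_bool_le (f : (I → Bool) → ℝ) :
    variance f (Measure.pi μ) ≤ ∑ i, (μ i).real {false} * (μ i).real {true} *
      ∫ ω, (f (update ω i true) - f (update ω i false)) ^ 2 ∂Measure.pi μ := by
  rw [variance_eq_sub MemLp.of_discrete]
  simp only [integral_pi_bool_eq_expect, Pi.pow_apply]
  exact BoolCube.variance_le_sum _ (fun _ _ => measureReal_nonneg)
    (fun i => measureReal_false_add_true (μ i)) f

end PiBool

namespace SimpleGraph

variable {V : Type*} {G : SimpleGraph V}

lemma Reachable.of_sup_edge {x y a b : V} (h : (G ⊔ edge x y).Reachable a b) :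
    G.Reachable a b ∨
      ((G.Reachable a x ∨ G.Reachable a y) ∧ (G.Reachable b x ∨ G.Reachable b y)) := by
  obtain ⟨p⟩ := h
  induction p with
  | nil => exact Or.inl .rfl
  | @cons u u' b hadj _ ih =>
    rcases hadj with hG | hxy
    · have r : G.Reachable u u' := hG.reachable
      exact ih.imp r.trans fun ⟨hu', hb⟩ => ⟨hu'.imp r.trans r.trans, hb⟩
    · obtain ⟨⟨rfl, rfl⟩ | ⟨rfl, rfl⟩, -⟩ := (edge_adj _ _ _ _).mp hxy
      · refine .inr ⟨.inl .rfl, ?_⟩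
        exact ih.elim (fun r => .inr r.symm) And.right
      · refine .inr ⟨.inr .rfl, ?_⟩
        exact ih.elim (fun r => .inl r.symm) And.right

lemma ConnectedComponent.card_le_card_sup_edge_add_one [Finite V] (x y : V) :
    Nat.card G.ConnectedComponent ≤ Nat.card (G ⊔ edge x y).ConnectedComponent + 1 := by
  classical
  let φ := ConnectedComponent.map (Hom.ofLE (le_sup_left : G ≤ G ⊔ edge x y))
  have hφ : ∀ A B, A ≠ G.connectedComponentMk y → B ≠ G.connectedComponentMk y →
      φ A = φ B → A = B := by
    refine ConnectedComponent.ind₂ fun a b ha hb hab => ?_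
    have ha' : ¬G.Reachable a y := fun h => ha (ConnectedComponent.eq.mpr h)
    have hb' : ¬G.Reachable b y := fun h => hb (ConnectedComponent.eq.mpr h)
    rcases Reachable.of_sup_edge (ConnectedComponent.eq.mp hab) with h | ⟨hax, hbx⟩
    · exact ConnectedComponent.eq.mpr h
    · exact ConnectedComponent.eq.mpr ((hax.resolve_right ha').trans (hbx.resolve_right hb').symm)
  rw [← Finite.card_option]
  refine Nat.card_le_card_of_injective
    (fun A => if A = G.connectedComponentMk y then none else some (φ A)) fun A B hAB => ?_
  by_cases hA : A = G.connectedComponentMk y <;> by_cases hB : B = G.connectedComponentMk y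
  · rw [hA, hB]
  all_goals simp only [hA, hB, if_true, if_false, reduceCtorEq, Option.some_inj] at hAB
  exact hφ A B hA hB hAB

lemma card_le_card_connectedComponent_of_isolated [Finite V] (s : Finset V)
    (hs : ∀ v ∈ s, ∀ w, ¬G.Adj v w) : s.card ≤ Nat.card G.ConnectedComponent := by
  rw [← Nat.card_eq_finsetCard]
  refine Nat.card_le_card_of_injective (fun v : s => G.connectedComponentMk v)
    fun ⟨v, hv⟩ ⟨w, hw⟩ hvw => ?_
  obtain ⟨p⟩ := ConnectedComponent.eq.mp hvw
  cases p with
  | nil => rfl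
  | cons h _ => exact (hs v hv _ h).elim

end SimpleGraph

open SimpleGraph

section CycGraph

variable {n : ℕ}

lemma cycGraph'_mono {ω ω' : Fin n × Fin (n / 2) → Bool}
    (h : ∀ e, ω e = true → ω' e = true) :
    cycGraph' n ω ≤ cycGraph' n ω' := by
  have h' : ∀ x y,
      (∃ e : Fin n × Fin (n / 2), ω e = true ∧ e.1 = x ∧ cycNbr e.1 e.2 = y) →
      ∃ e : Fin n × Fin (n / 2), ω' e = true ∧ e.1 = x ∧ cycNbr e.1 e.2 = y :=
    fun _ _ ⟨e, he, hx, hy⟩ => ⟨e, h e he, hx, hy⟩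
  intro a b
  simp only [cycGraph', fromRel_adj]
  exact fun ⟨hne, hab⟩ => ⟨hne, hab.imp (h' a b) (h' b a)⟩

lemma cycGraph'_update_true_le (ω : Fin n × Fin (n / 2) → Bool) (e : Fin n × Fin (n / 2)) :
    cycGraph' n (update ω e true) ≤
      cycGraph' n (update ω e false) ⊔ edge e.1 (cycNbr e.1 e.2) := by
  have h' : ∀ x y, (∃ e' : Fin n × Fin (n / 2),
      update ω e true e' = true ∧ e'.1 = x ∧ cycNbr e'.1 e'.2 = y) →
      (∃ e' : Fin n × Fin (n / 2),
        update ω e false e' = true ∧ e'.1 = x ∧ cycNbr e'.1 e'.2 = y) ∨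
      (x = e.1 ∧ y = cycNbr e.1 e.2) := by
    rintro x y ⟨e', he', rfl, rfl⟩
    by_cases h : e' = e
    · exact .inr (h ▸ ⟨rfl, rfl⟩)
    · rw [update_of_ne h] at he'
      exact .inl ⟨e', by rwa [update_of_ne h], rfl, rfl⟩
  intro a b hab
  simp only [cycGraph', fromRel_adj] at hab
  simp only [sup_adj, cycGraph', fromRel_adj, edge_adj]
  obtain ⟨hne, hab | hba⟩ := hab
  · exact (h' a b hab).imp (fun h => ⟨hne, .inl h⟩) fun h => ⟨.inl h, hne⟩
  · exact (h' b a hba).imp (fun h => ⟨hne, .inr h⟩) fun h => ⟨.inr h.symm, hne⟩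

lemma numComponents_update_true_le (ω : Fin n × Fin (n / 2) → Bool) (e : Fin n × Fin (n / 2)) :
    numComponents n (update ω e true) ≤ numComponents n (update ω e false) :=
  ConnectedComponent.card_le_card_of_le <| cycGraph'_mono fun e' he' => by
    by_cases h : e' = e
    · rw [h, update_self]
    · rwa [update_of_ne h] at he' ⊢

lemma numComponents_update_false_le (ω : Fin n × Fin (n / 2) → Bool)
    (e : Fin n × Fin (n / 2)) :
    numComponents n (update ω e false) ≤ numComponents n (update ω e true) + 1 :=
  (ConnectedComponent.card_le_card_sup_edge_add_one _ _).trans <| Nat.add_le_add_right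
    (ConnectedComponent.card_le_card_of_le (cycGraph'_update_true_le ω e)) 1

lemma sq_numComponents_update_sub_le_one (ω : Fin n × Fin (n / 2) → Bool)
    (e : Fin n × Fin (n / 2)) :
    ((numComponents n (update ω e true) : ℝ) -
      numComponents n (update ω e false)) ^ 2 ≤ 1 := by
  have h₁ : (numComponents n (update ω e true) : ℝ) ≤
      numComponents n (update ω e false) := by
    exact_mod_cast numComponents_update_true_le ω e
  have h₂ : (numComponents n (update ω e false) : ℝ) ≤
      numComponents n (update ω e true) + 1 := by
    exact_mod_cast numComponents_update_false_le ω e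
  nlinarith

def cycIncident (n : ℕ) (v : Fin n) : Finset (Fin n × Fin (n / 2)) :=
  {e | e.1 = v ∨ cycNbr e.1 e.2 = v}

lemma card_isolated_le_numComponents (ω : Fin n × Fin (n / 2) → Bool) :
    ({v | ∀ e ∈ cycIncident n v, ω e = false} : Finset (Fin n)).card ≤
      numComponents n ω := by
  refine card_le_card_connectedComponent_of_isolated _ fun v hv w hvw => ?_
  simp only [Finset.mem_filter, Finset.mem_univ, true_and, cycIncident] at hv
  simp only [cycGraph', fromRel_adj] at hvw
  obtain ⟨-, ⟨e, he, h1, -⟩ | ⟨e, he, -, h2⟩⟩ := hvw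
  · simp [hv e (.inl h1)] at he
  · simp [hv e (.inr h2)] at he

lemma cycNbr_left_injective (k : Fin (n / 2)) : Injective fun i : Fin n => cycNbr i k := by
  intro i j hij
  have h : (i.val + (k.val + 1)) % n = (j.val + (k.val + 1)) % n := by
    simpa [cycNbr, add_assoc] using congrArg Fin.val hij
  exact Fin.ext (by simpa [Nat.ModEq, Nat.mod_eq_of_lt i.isLt, Nat.mod_eq_of_lt j.isLt] using
    Nat.ModEq.add_right_cancel' _ h)

lemma sum_cycIncident_le_two {p : Fin (n / 2) → ℝ} (hnn : ∀ ℓ, 0 ≤ p ℓ)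
    (hsum : ∑ ℓ, p ℓ = 1) (v : Fin n) : ∑ e ∈ cycIncident n v, p e.2 ≤ 2 := by
  have hout : ∑ e : Fin n × Fin (n / 2), (if e.1 = v then p e.2 else 0) = 1 := by
    simp [Fintype.sum_prod_type, hsum]
  have hin : ∑ e : Fin n × Fin (n / 2), (if cycNbr e.1 e.2 = v then p e.2 else 0) ≤ 1 := by
    rw [← Finset.sum_filter,
      ← Finset.sum_image (g := Prod.snd) fun x hx y hy hxy => Prod.ext ?_ hxy]
    · exact hsum ▸ Finset.sum_le_sum_of_subset_of_nonneg (Finset.subset_univ _)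
        fun k _ _ => hnn k
    · simp only [Finset.coe_filter, Finset.mem_univ, true_and, Set.mem_ofPred_eq] at hx hy
      exact cycNbr_left_injective x.2 (show cycNbr x.1 x.2 = cycNbr y.1 x.2 by rw [hx, hxy, hy])
  calc ∑ e ∈ cycIncident n v, p e.2
      ≤ ∑ e : Fin n × Fin (n / 2),
          ((if e.1 = v then p e.2 else 0) + (if cycNbr e.1 e.2 = v then p e.2 else 0)) := by
        rw [cycIncident, Finset.sum_filter]
        refine Finset.sum_le_sum fun e _ => ?_
        have := hnn e.2
        split_ifs <;> first | linarith | tauto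
    _ ≤ 2 := by rw [Finset.sum_add_distrib]; linarith

end CycGraph

section Bern

instance inst_s16 (x : ℝ) : IsProbabilityMeasure (bern01 x) := by
  unfold bern01; infer_instance

lemma bern01_real_true {x : ℝ} (hx : 0 ≤ x) : (bern01 x).real {true} = 1 - Real.exp (-x) := by
  have h : Real.exp (-x) ≤ 1 := Real.exp_le_one_iff.mpr (neg_nonpos.mpr hx)
  rw [measureReal_def, bern01, PMF.toMeasure_apply_singleton _ _ (measurableSet_singleton _),
    PMF.bernoulli, PMF.ofFintype_apply, cond_true, ENNReal.coe_toReal,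
    Real.coe_toNNReal _ (by linarith)]

lemma bern01_real_false {x : ℝ} (hx : 0 ≤ x) : (bern01 x).real {false} = Real.exp (-x) := by
  linarith [measureReal_false_add_true (bern01 x), bern01_real_true hx]

end Bern

section Concentration

open ProbabilityTheory

variable {n : ℕ} {c : ℝ} {p : Fin (n / 2) → ℝ}

instance : IsProbabilityMeasure (cycMeasure n c p) := by
  unfold cycMeasure; infer_instance

lemma cycMeasure_real_isolated (hc : 0 ≤ c) (hnn : ∀ ℓ, 0 ≤ p ℓ) (v : Fin n) :
    (cycMeasure n c p).real {ω | ∀ e ∈ cycIncident n v, ω e = false} =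
      Real.exp (-∑ e ∈ cycIncident n v, c / 2 * p e.2) := by
  have h := measureReal_pi_forall_mem (fun e : Fin n × Fin (n / 2) => bern01 (c / 2 * p e.2))
    (cycIncident n v) fun _ => {false}
  simp only [Set.mem_singleton_iff] at h
  rw [cycMeasure, h, ← Finset.sum_neg_distrib, Real.exp_sum]
  exact Finset.prod_congr rfl fun e _ => bern01_real_false (by have := hnn e.2; positivity)

lemma mul_exp_neg_le_integral_numComponents (hc : 0 ≤ c) (hnn : ∀ ℓ, 0 ≤ p ℓ)
    (hsum : ∑ ℓ, p ℓ = 1) :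
    n * Real.exp (-c) ≤ ∫ ω, (numComponents n ω : ℝ) ∂cycMeasure n c p := by
  let iso : Fin n → Set (Fin n × Fin (n / 2) → Bool) :=
    fun v => {ω | ∀ e ∈ cycIncident n v, ω e = false}
  have hpt : ∀ ω, ∑ v, (iso v).indicator 1 ω ≤ (numComponents n ω : ℝ) := fun ω => by
    simp only [Set.indicator_apply, Pi.one_apply, Finset.sum_boole, iso, Set.mem_ofPred_eq]
    exact_mod_cast card_isolated_le_numComponents ω
  have hiso : ∀ v, Real.exp (-c) ≤ (cycMeasure n c p).real (iso v) := fun v => by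
    rw [cycMeasure_real_isolated hc hnn v, Real.exp_le_exp, neg_le_neg_iff, ← Finset.mul_sum]
    nlinarith [sum_cycIncident_le_two hnn hsum v]
  calc (n : ℝ) * Real.exp (-c) ≤ ∑ v, (cycMeasure n c p).real (iso v) := by
        simpa using Finset.sum_le_sum fun v (_ : v ∈ Finset.univ) => hiso v
    _ = ∫ ω, ∑ v, (iso v).indicator 1 ω ∂cycMeasure n c p := by
        rw [integral_finsetSum _ fun _ _ => Integrable.of_finite]
        simp only [integral_indicator_one (Set.toFinite _).measurableSet]
    _ ≤ _ := integral_mono Integrable.of_finite Integrable.of_finite hpt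

lemma variance_numComponents_le (hc : 0 ≤ c) (hnn : ∀ ℓ, 0 ≤ p ℓ)
    (hsum : ∑ ℓ, p ℓ = 1) :
    variance (fun ω => (numComponents n ω : ℝ)) (cycMeasure n c p) ≤ c * n / 2 := by
  have hx : ∀ e : Fin n × Fin (n / 2), 0 ≤ c / 2 * p e.2 := fun e => by
    have := hnn e.2; positivity
  have hterm : ∀ e : Fin n × Fin (n / 2),
      (bern01 (c / 2 * p e.2)).real {false} * (bern01 (c / 2 * p e.2)).real {true} *
        ∫ ω, ((numComponents n (update ω e true) : ℝ) -
          numComponents n (update ω e false)) ^ 2 ∂cycMeasure n c p ≤ c / 2 * p e.2 := by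
    intro e
    have hint : ∫ ω, ((numComponents n (update ω e true) : ℝ) -
        numComponents n (update ω e false)) ^ 2 ∂cycMeasure n c p ≤ 1 :=
      (integral_mono Integrable.of_finite (integrable_const 1)
        fun ω => sq_numComponents_update_sub_le_one ω e).trans_eq (by simp)
    calc _ ≤ 1 * (bern01 (c / 2 * p e.2)).real {true} * 1 := by
          gcongr
          exact measureReal_le_one
      _ ≤ c / 2 * p e.2 := by
          rw [one_mul, mul_one, bern01_real_true (hx e)]
          linarith [Real.add_one_le_exp (-(c / 2 * p e.2))]
  calc variance (fun ω => (numComponents n ω : ℝ)) (cycMeasure n c p)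
      ≤ ∑ e : Fin n × Fin (n / 2), c / 2 * p e.2 :=
        (variance_pi_bool_le _ _).trans (Finset.sum_le_sum fun e _ => hterm e)
    _ = c * n / 2 := by
        simp only [Fintype.sum_prod_type, ← Finset.mul_sum, hsum, Finset.sum_const,
          Finset.card_univ, Fintype.card_fin, nsmul_eq_mul]
        ring

lemma measureReal_relative_deviation_le (hc : 0 ≤ c) (hnn : ∀ ℓ, 0 ≤ p ℓ)
    (hsum : ∑ ℓ, p ℓ = 1) (hn : 0 < n) {δ : ℝ} (hδ : 0 < δ) :
    (cycMeasure n c p).real {ω | δ < |(numComponents n ω : ℝ) /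
        (∫ ω', (numComponents n ω' : ℝ) ∂cycMeasure n c p) - 1|} ≤
      c * Real.exp (2 * c) / (2 * δ ^ 2) / n := by
  set μ := cycMeasure n c p
  set K : (Fin n × Fin (n / 2) → Bool) → ℝ := fun ω => (numComponents n ω : ℝ)
  have hmean : n * Real.exp (-c) ≤ μ[K] := mul_exp_neg_le_integral_numComponents hc hnn hsum
  have hM : 0 < μ[K] := lt_of_lt_of_le (by positivity) hmean
  have hsub : {ω | δ < |K ω / μ[K] - 1|} ⊆ {ω | δ * μ[K] ≤ |K ω - μ[K]|} := by
    intro ω hω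
    rw [Set.mem_ofPred_eq, div_sub_one hM.ne', abs_div, abs_of_pos hM, lt_div_iff₀ hM] at hω
    exact hω.le
  calc μ.real {ω | δ < |K ω / μ[K] - 1|}
      ≤ μ.real {ω | δ * μ[K] ≤ |K ω - μ[K]|} := measureReal_mono hsub
    _ ≤ variance K μ / (δ * μ[K]) ^ 2 :=
        ENNReal.toReal_le_of_le_ofReal (by have := variance_nonneg K μ; positivity)
          (meas_ge_le_variance_div_sq MemLp.of_discrete (mul_pos hδ hM))
    _ ≤ c * n / 2 / (δ * (n * Real.exp (-c))) ^ 2 := by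
        gcongr
        exact variance_numComponents_le hc hnn hsum
    _ = c * Real.exp (2 * c) / (2 * δ ^ 2) / n := by
        rw [Real.exp_neg, show 2 * c = c + c by ring, Real.exp_add]
        field_simp

end Concentration

theorem components_concentration_general
    (c : ℝ) (hc : 0 < c)
    (pdist : (n : ℕ) → Fin (n / 2) → ℝ)
    (hnn : ∀ n ℓ, 0 ≤ pdist n ℓ)
    (hsum : ∀ n, 2 ≤ n → ∑ ℓ, pdist n ℓ = 1) :
    ∀ δ > (0 : ℝ),
      Tendsto (fun n =>
        ((cycMeasure n c (pdist n))
          {ω | δ < |(numComponents n ω : ℝ) /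
              (∫ ω', (numComponents n ω' : ℝ) ∂cycMeasure n c (pdist n)) - 1|}).toReal)
        atTop (nhds 0) := by
  intro δ hδ
  refine squeeze_zero' (.of_forall fun _ => ENNReal.toReal_nonneg) ?_
    (tendsto_const_div_atTop_nhds_zero_nat (c * Real.exp (2 * c) / (2 * δ ^ 2)))
  filter_upwards [eventually_ge_atTop 2] with n hn
  exact measureReal_relative_deviation_le hc.le (hnn n) (hsum n hn) (by omega) hδ

/-- With `ε_n = max_ℓ p_ℓ^n → 0` and `t = cn/2`, the number of connected components is
concentrated around its mean: `K_t / E[K_t] → 1` in probability as `n → ∞`. -/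
theorem components_concentration
    (c : ℝ) (hc : 0 < c)
    (pdist : (n : ℕ) → Fin (n / 2) → ℝ)
    (hnn : ∀ n ℓ, 0 ≤ pdist n ℓ)
    (hsum : ∀ n, 2 ≤ n → ∑ ℓ, pdist n ℓ = 1)
    (ε : ℕ → ℝ) (hεb : ∀ n ℓ, pdist n ℓ ≤ ε n)
    (hε0 : Tendsto ε atTop (nhds 0)) :
    ∀ δ > (0 : ℝ),
      Tendsto (fun n =>
        ((cycMeasure n c (pdist n))
          {ω | δ < |(numComponents n ω : ℝ) /
              (∫ ω', (numComponents n ω' : ℝ) ∂cycMeasure n c (pdist n)) - 1|}).toReal)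
        atTop (nhds 0) :=
  components_concentration_general c hc pdist hnn hsum
end
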